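/- For integers a ≥ 0, b ≥ 0 with a+b > 0, the derivation δ_{2a} of the free Lie algebra L(T,A) satisfies 2·δ_{2a}(ad_T^{2b}(A)) = h_{a,b}(x,y)∘(A,A), where for a polynomial f(x,y) = Σ c_{rs} x^r y^s one defines f(x,y)∘(A,A) = Σ c_{rs}[ad_T^r(A), ad_T^s(A)], and h_{a,b}(x,y) = x^{2a-1}y^{2b} - x^{2b}y^{2a-1} + xy(x+y)^{2b-1}(y^{2a-2} - x^{2a-2}) (interpreted via its polynomial factored form). -/

import Mathlib

/-! The pairing `f ↦ f ∘ (A,A)` is linear, changes sign under `x ↔ y`, and turns `ad_T` into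
multiplication by `x + y`. By the Leibniz rule, `δ(ad_T^n A) = Q_n ∘ (A,A)` with
`Q_{n+1} = (x+y) Q_n - x^{2a} y^n`, so `2 δ(ad_T^{2b} A) = (Q_{2b}(x,y) - Q_{2b}(y,x)) ∘ (A,A)`.
The antisymmetrisation obeys the antisymmetrised recursion, with `(x+y)(Q_0(x,y) - Q_0(y,x)) =
x^{2a} - y^{2a}` by a geometric sum; after multiplying by `xy(x+y)` it has a closed form, which
matches `xy(x+y) h_{a,b}` in each of the three cases of the definition of `h`, and `xy(x+y)` cancels
in the domain `ℚ[x,y]`. -/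

open scoped BigOperators

noncomputable section

namespace Stmt16

abbrev L := FreeLieAlgebra ℚ (Fin 2)

def T : L := FreeLieAlgebra.of ℚ 0

def A : L := FreeLieAlgebra.of ℚ 1

def ad : Module.End ℚ L := LieAlgebra.ad ℚ L T

/-- The Levin–Racinet pairing `f(x,y) ∘ (A,A)`: the linear extension of
`x^r y^s ↦ [ad_T^r(A), ad_T^s(A)]`. -/
def pairing (p : MvPolynomial (Fin 2) ℚ) : L :=
  ∑ m ∈ p.support, MvPolynomial.coeff m p • ⁅(ad ^ (m 0)) A, (ad ^ (m 1)) A⁆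

def X : MvPolynomial (Fin 2) ℚ := MvPolynomial.X 0

def Y : MvPolynomial (Fin 2) ℚ := MvPolynomial.X 1

/-- The polynomial
`h_{a,b}(x,y) = x^{2a-1}y^{2b} - x^{2b}y^{2a-1} + xy(x+y)^{2b-1}(y^{2a-2} - x^{2a-2})`,
where for `a = 0` or `b = 0` the negative exponents are interpreted via the equivalent
polynomial (factored) form:
`h_{0,b} = -∑_{i+j=2b-1} (C(2b,i+1) - C(2b,j+1)) x^i y^j` and, for `a ≥ 1`,
`h_{a,0} = x^{2a-1} - y^{2a-1} - xy ∑_{i+j=2a-3} (-1)^j x^i y^j`. -/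
def h (a b : ℕ) : MvPolynomial (Fin 2) ℚ :=
  if a = 0 then
    -∑ p ∈ Finset.HasAntidiagonal.antidiagonal (2 * b - 1),
        (((2 * b).choose (p.1 + 1) : ℚ) - ((2 * b).choose (p.2 + 1) : ℚ)) • (X ^ p.1 * Y ^ p.2)
  else if b = 0 then
    if a = 1 then X - Y
    else X ^ (2 * a - 1) - Y ^ (2 * a - 1)
      - X * Y * ∑ p ∈ Finset.HasAntidiagonal.antidiagonal (2 * a - 3), ((-1 : ℚ) ^ p.2) • (X ^ p.1 * Y ^ p.2)
  else
    X ^ (2 * a - 1) * Y ^ (2 * b) - X ^ (2 * b) * Y ^ (2 * a - 1)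
      + X * Y * (X + Y) ^ (2 * b - 1) * (Y ^ (2 * a - 2) - X ^ (2 * a - 2))

open MvPolynomial Finset

theorem sub_mul_sum_antidiagonal_pow {R : Type*} [CommRing R] (x y : R) (n : ℕ) :
    (x - y) * ∑ p ∈ antidiagonal n, x ^ p.1 * y ^ p.2 = x ^ (n + 1) - y ^ (n + 1) := by
  induction n with
  | zero => simp
  | succ n ih =>
    rw [Nat.sum_antidiagonal_succ']
    simp only [pow_succ y, ← mul_assoc, ← sum_mul, pow_zero, mul_one]
    linear_combination y * ih

theorem mul_sum_antidiagonal_choose_succ {R : Type*} [CommRing R] (x y : R) (n : ℕ) :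
    x * ∑ p ∈ antidiagonal n, (n + 1).choose (p.1 + 1) • (x ^ p.1 * y ^ p.2)
      = (x + y) ^ (n + 1) - y ^ (n + 1) := by
  rw [(Commute.all x y).add_pow', Nat.sum_antidiagonal_succ, mul_sum]
  simp only [Nat.choose_zero_right, pow_zero, one_mul, one_smul, mul_smul_comm, pow_succ]
  ring_nf

theorem sum_antidiagonal_eq_sum_filter_lt_add_swap {M : Type*} [AddCommMonoid M] {n : ℕ}
    (hn : Odd n) (g : ℕ × ℕ → M) :
    ∑ p ∈ antidiagonal n, g p
      = ∑ p ∈ (antidiagonal n).filter (fun p => p.2 < p.1), (g p + g p.swap) := by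
  rw [sum_add_distrib, ← sum_filter_add_sum_filter_not (antidiagonal n) (fun p => p.2 < p.1)]
  congr 1
  refine Eq.trans ?_ (sum_map _ (Equiv.prodComm ℕ ℕ).toEmbedding g)
  congr 1
  obtain ⟨c, rfl⟩ := hn
  ext ⟨i, j⟩
  simp only [mem_filter, HasAntidiagonal.mem_antidiagonal, mem_map_equiv, Equiv.prodComm_symm,
    Equiv.prodComm_apply, Prod.fst_swap, Prod.snd_swap]
  omega

theorem neg_one_pow_succ_eq_neg {R : Type*} [Ring R] {i j : ℕ} (hij : Odd (i + j)) :
    (-1 : R) ^ (j + 1) = -(-1) ^ (i + 1) := by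
  rcases Nat.even_or_odd i with hi | hi
  · rw [(Nat.odd_add'.mp hij |>.mpr hi).add_one.neg_one_pow, hi.add_one.neg_one_pow, neg_neg]
  · rw [(Nat.odd_add.mp hij |>.mp hi).add_one.neg_one_pow, hi.add_one.neg_one_pow]

def pairingₗ : MvPolynomial (Fin 2) ℚ →ₗ[ℚ] L :=
  (basisMonomials (Fin 2) ℚ).constr ℚ fun m => ⁅(ad ^ m 0) A, (ad ^ m 1) A⁆

theorem pairingₗ_apply (p : MvPolynomial (Fin 2) ℚ) : pairingₗ p = pairing p := by
  rw [pairingₗ, Module.Basis.constr_apply]; rfl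

theorem monomial_one_eq_X_pow_mul_Y_pow (m : Fin 2 →₀ ℕ) :
    monomial m (1 : ℚ) = X ^ m 0 * Y ^ m 1 := by
  rw [monomial_eq, C_1, one_mul, Finsupp.prod_fintype _ _ (fun _ => pow_zero _), Fin.prod_univ_two,
    X, Y]

theorem linearMap_ext_X_pow_mul_Y_pow {M : Type*} [AddCommMonoid M] [Module ℚ M]
    {f g : MvPolynomial (Fin 2) ℚ →ₗ[ℚ] M}
    (hXY : ∀ r s, f (X ^ r * Y ^ s) = g (X ^ r * Y ^ s)) : f = g :=
  linearMap_ext fun m => LinearMap.ext_ring <| by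
    simpa [monomial_one_eq_X_pow_mul_Y_pow] using hXY (m 0) (m 1)

theorem pairing_X_pow_mul_Y_pow (r s : ℕ) :
    pairing (X ^ r * Y ^ s) = ⁅(ad ^ r) A, (ad ^ s) A⁆ := by
  have hm := monomial_one_eq_X_pow_mul_Y_pow (Finsupp.single 0 r + Finsupp.single 1 s)
  simp at hm
  rw [← hm, ← pairingₗ_apply, pairingₗ]
  exact ((basisMonomials (Fin 2) ℚ).constr_basis ℚ _ _).trans (by simp)

def swapXY : MvPolynomial (Fin 2) ℚ →ₐ[ℚ] MvPolynomial (Fin 2) ℚ :=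
  rename (Equiv.swap 0 1)

theorem swapXY_X : swapXY X = Y := by simp [swapXY, X, Y]

theorem swapXY_Y : swapXY Y = X := by simp [swapXY, X, Y]

theorem pairing_swapXY (p : MvPolynomial (Fin 2) ℚ) : pairing (swapXY p) = -pairing p := by
  have hlin : pairingₗ ∘ₗ swapXY.toLinearMap = -pairingₗ :=
    linearMap_ext_X_pow_mul_Y_pow fun r s => by
      simp only [LinearMap.comp_apply, AlgHom.toLinearMap_apply, LinearMap.neg_apply, map_mul,
        map_pow, swapXY_X, swapXY_Y, pairingₗ_apply, mul_comm (Y ^ r), pairing_X_pow_mul_Y_pow]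
      rw [lie_skew]
  simpa [pairingₗ_apply] using LinearMap.congr_fun hlin p

theorem two_smul_pairing (p : MvPolynomial (Fin 2) ℚ) :
    (2 : ℚ) • pairing p = pairing (p - swapXY p) := by
  rw [← pairingₗ_apply, ← pairingₗ_apply, map_sub, pairingₗ_apply, pairingₗ_apply,
    pairing_swapXY, sub_neg_eq_add, two_smul]

theorem ad_apply (x : L) : ad x = ⁅T, x⁆ := rfl

theorem ad_pow_succ_A (n : ℕ) : (ad ^ (n + 1)) A = ⁅T, (ad ^ n) A⁆ := by
  rw [pow_succ', Module.End.mul_apply, ad_apply]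

theorem lie_T_pairing (p : MvPolynomial (Fin 2) ℚ) :
    ⁅T, pairing p⁆ = pairing ((X + Y) * p) := by
  have hlin : ad ∘ₗ pairingₗ = pairingₗ ∘ₗ LinearMap.mulLeft ℚ (X + Y) :=
    linearMap_ext_X_pow_mul_Y_pow fun r s => by
      rw [LinearMap.comp_apply, LinearMap.comp_apply, LinearMap.mulLeft_apply,
        show (X + Y) * (X ^ r * Y ^ s) = X ^ (r + 1) * Y ^ s + X ^ r * Y ^ (s + 1) by ring,
        map_add]
      simp only [pairingₗ_apply, pairing_X_pow_mul_Y_pow, ad_pow_succ_A]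
      rw [ad_apply, leibniz_lie]
  simpa [pairingₗ_apply, ad_apply] using LinearMap.congr_fun hlin p

def derivPoly (k : ℕ) (q : MvPolynomial (Fin 2) ℚ) : ℕ → MvPolynomial (Fin 2) ℚ
  | 0 => q
  | n + 1 => (X + Y) * derivPoly k q n - X ^ k * Y ^ n

theorem apply_ad_pow_A_eq_pairing_derivPoly {k : ℕ} {q : MvPolynomial (Fin 2) ℚ}
    (D : LieDerivation ℚ L L) (hT : D T = -(ad ^ k) A) (hA : D A = pairing q) (n : ℕ) :
    D ((ad ^ n) A) = pairing (derivPoly k q n) := by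
  induction n with
  | zero => exact hA
  | succ n ih =>
    rw [ad_pow_succ_A, LieDerivation.apply_lie_eq_add, ih, hT, neg_lie, lie_T_pairing,
      ← pairing_X_pow_mul_Y_pow, derivPoly, ← pairingₗ_apply, ← pairingₗ_apply,
      ← pairingₗ_apply, map_sub, sub_eq_add_neg]

theorem swapXY_derivPoly_succ (k : ℕ) (q : MvPolynomial (Fin 2) ℚ) (n : ℕ) :
    swapXY (derivPoly k q (n + 1)) = (X + Y) * swapXY (derivPoly k q n) - Y ^ k * X ^ n := by
  rw [derivPoly, map_sub, map_mul, map_mul, map_add, map_pow, map_pow, swapXY_X, swapXY_Y,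
    add_comm Y]

/-- `X * Y * (X + Y) * h a b` for `k = 2 * a`, `n = 2 * b`: clearing the denominators of `h`
removes the special cases `a = 0` and `b = 0`. -/
def hScaled (k n : ℕ) : MvPolynomial (Fin 2) ℚ :=
  X * Y * (X + Y) ^ n * (X ^ k - Y ^ k)
    - (X + Y) * (Y * X ^ k * ((X + Y) ^ n - Y ^ n) - X * Y ^ k * ((X + Y) ^ n - X ^ n))

theorem mul_derivPoly_sub_swapXY {k : ℕ} {q : MvPolynomial (Fin 2) ℚ}
    (hq : (X + Y) * (q - swapXY q) = X ^ k - Y ^ k) (n : ℕ) :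
    X * Y * (X + Y) * (derivPoly k q n - swapXY (derivPoly k q n)) = hScaled k n := by
  induction n with
  | zero =>
    rw [hScaled, derivPoly]
    linear_combination X * Y * hq
  | succ n ih =>
    rw [hScaled, swapXY_derivPoly_succ, derivPoly]
    rw [hScaled] at ih
    linear_combination (X + Y) * ih

def deltaAPoly (a : ℕ) : MvPolynomial (Fin 2) ℚ :=
  ∑ p ∈ (antidiagonal (2 * a - 1)).filter (fun p => p.2 < p.1),
    ((-1 : ℚ) ^ (p.1 + 1)) • (X ^ p.1 * Y ^ p.2)

theorem pairing_deltaAPoly (a : ℕ) :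
    pairing (deltaAPoly a) = ∑ p ∈ (antidiagonal (2 * a - 1)).filter (fun p => p.2 < p.1),
      ((-1 : ℚ) ^ (p.1 + 1)) • ⁅(ad ^ p.1) A, (ad ^ p.2) A⁆ := by
  rw [deltaAPoly, ← pairingₗ_apply, map_sum]
  simp only [map_smul, pairingₗ_apply, pairing_X_pow_mul_Y_pow]

theorem deltaAPoly_sub_swapXY (c : ℕ) :
    deltaAPoly (c + 1) - swapXY (deltaAPoly (c + 1))
      = ∑ p ∈ antidiagonal (2 * c + 1), ((-1 : ℚ) ^ (p.1 + 1)) • (X ^ p.1 * Y ^ p.2) := by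
  rw [sum_antidiagonal_eq_sum_filter_lt_add_swap (odd_two_mul_add_one c), deltaAPoly,
    show 2 * (c + 1) - 1 = 2 * c + 1 by omega, map_sum, ← sum_sub_distrib]
  refine sum_congr rfl fun p hp => ?_
  have hodd : Odd (p.1 + p.2) := by
    rw [HasAntidiagonal.mem_antidiagonal.mp (mem_filter.mp hp).1]; exact odd_two_mul_add_one c
  rw [map_smul, map_mul, map_pow, map_pow, swapXY_X, swapXY_Y, Prod.fst_swap, Prod.snd_swap,
    neg_one_pow_succ_eq_neg hodd, neg_smul, mul_comm (Y ^ _), sub_eq_add_neg]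

theorem X_add_Y_mul_deltaAPoly_sub_swapXY (a : ℕ) :
    (X + Y) * (deltaAPoly a - swapXY (deltaAPoly a)) = X ^ (2 * a) - Y ^ (2 * a) := by
  rcases a with _ | c
  · simp [deltaAPoly, filter_singleton]
  · have hgeom := sub_mul_sum_antidiagonal_pow (-X) Y (2 * c + 1)
    have hsum : ∑ p ∈ antidiagonal (2 * c + 1), ((-1 : ℚ) ^ (p.1 + 1)) • (X ^ p.1 * Y ^ p.2)
        = -∑ p ∈ antidiagonal (2 * c + 1), (-X) ^ p.1 * Y ^ p.2 := by
      rw [← sum_neg_distrib]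
      refine sum_congr rfl fun p _ => ?_
      rw [smul_eq_C_mul, map_pow, map_neg, map_one, neg_pow]
      ring
    rw [deltaAPoly_sub_swapXY, hsum]
    rw [show 2 * c + 1 + 1 = 2 * (c + 1) by ring, (even_two_mul _).neg_pow] at hgeom
    linear_combination hgeom

theorem X_mul_Y_mul_X_add_Y_mul_h_zero_left (d : ℕ) :
    X * Y * (X + Y) * h 0 (d + 1) = hScaled 0 (2 * (d + 1)) := by
  have hS₁ := mul_sum_antidiagonal_choose_succ X Y (2 * d + 1)
  have hS₂ := mul_sum_antidiagonal_choose_succ Y X (2 * d + 1)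
  rw [← Nat.sum_antidiagonal_swap] at hS₂
  simp only [Prod.fst_swap, Prod.snd_swap, mul_comm (Y ^ _)] at hS₂
  rw [h, if_pos rfl, show 2 * (d + 1) - 1 = 2 * d + 1 by omega,
    show 2 * (d + 1) = 2 * d + 1 + 1 by omega]
  simp only [sub_smul, sum_sub_distrib, Nat.cast_smul_eq_nsmul]
  rw [hScaled]
  linear_combination (-(X + Y) * Y) * hS₁ + ((X + Y) * X) * hS₂

theorem X_mul_Y_mul_X_add_Y_mul_h_zero_right (c : ℕ) :
    X * Y * (X + Y) * h (c + 1) 0 = hScaled (2 * (c + 1)) 0 := by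
  rcases c with _ | e
  · rw [h, if_neg (by omega), if_pos rfl, if_pos rfl, hScaled]
    ring
  · have hgeom := sub_mul_sum_antidiagonal_pow X (-Y) (2 * e + 1)
    rw [show 2 * e + 1 + 1 = 2 * (e + 1) by ring, (even_two_mul _).neg_pow,
      sub_neg_eq_add] at hgeom
    have hsum : ∑ p ∈ antidiagonal (2 * e + 1), ((-1 : ℚ) ^ p.2) • (X ^ p.1 * Y ^ p.2)
        = ∑ p ∈ antidiagonal (2 * e + 1), X ^ p.1 * (-Y) ^ p.2 := by
      refine sum_congr rfl fun p _ => ?_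
      rw [smul_eq_C_mul, map_pow, map_neg, map_one, neg_pow]
      ring
    rw [h, if_neg (by omega), if_pos rfl, if_neg (by omega), hScaled,
      show 2 * (e + 1 + 1) - 1 = 2 * e + 3 by omega, show 2 * (e + 1 + 1) - 3 = 2 * e + 1 by omega,
      hsum, show 2 * (e + 1 + 1) = 2 * e + 4 by omega]
    linear_combination (-(X * Y * (X * Y))) * hgeom

theorem X_mul_Y_mul_X_add_Y_mul_h_succ_succ (c d : ℕ) :
    X * Y * (X + Y) * h (c + 1) (d + 1) = hScaled (2 * (c + 1)) (2 * (d + 1)) := by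
  rw [h, if_neg (by omega), if_neg (by omega), hScaled, show 2 * (c + 1) - 1 = 2 * c + 1 by omega,
    show 2 * (c + 1) - 2 = 2 * c by omega, show 2 * (d + 1) - 1 = 2 * d + 1 by omega]
  ring

theorem X_mul_Y_mul_X_add_Y_mul_h {a b : ℕ} (hab : 0 < a + b) :
    X * Y * (X + Y) * h a b = hScaled (2 * a) (2 * b) := by
  rcases a with _ | c <;> rcases b with _ | d
  · omega
  · exact X_mul_Y_mul_X_add_Y_mul_h_zero_left d
  · exact X_mul_Y_mul_X_add_Y_mul_h_zero_right c
  · exact X_mul_Y_mul_X_add_Y_mul_h_succ_succ c d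

theorem X_mul_Y_mul_X_add_Y_ne_zero : X * Y * (X + Y) ≠ (0 : MvPolynomial (Fin 2) ℚ) := by
  intro h0
  simpa [X, Y] using congrArg (eval fun _ => (1 : ℚ)) h0

/-- For `a, b ≥ 0` with `a + b > 0`, the derivation `δ_{2a}` (determined by
`δ_{2a}(T) = -ad_T^{2a}(A)`, `δ_{2a}(A) = ∑_{j>k≥0, j+k=2a-1} (-1)^{j+1}[ad_T^j(A), ad_T^k(A)]`;
for `a = 0` this is `δ₀(T) = -A`, `δ₀(A) = 0`) satisfies
`2 δ_{2a}(ad_T^{2b}(A)) = h_{a,b}(x,y) ∘ (A,A)`. -/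
theorem two_delta_eq_pairing (a b : ℕ) (hab : 0 < a + b) (D : LieDerivation ℚ L L)
    (hT : D T = -((ad ^ (2 * a)) A))
    (hA : D A = ∑ p ∈ (Finset.HasAntidiagonal.antidiagonal (2 * a - 1)).filter (fun p => p.2 < p.1),
        ((-1 : ℚ) ^ (p.1 + 1)) • ⁅(ad ^ p.1) A, (ad ^ p.2) A⁆) :
    (2 : ℚ) • D ((ad ^ (2 * b)) A) = pairing (h a b) := by
  rw [apply_ad_pow_A_eq_pairing_derivPoly D hT (hA.trans (pairing_deltaAPoly a).symm),
    two_smul_pairing]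
  congr 1
  refine mul_left_cancel₀ X_mul_Y_mul_X_add_Y_ne_zero ?_
  rw [mul_derivPoly_sub_swapXY (X_add_Y_mul_deltaAPoly_sub_swapXY a),
    X_mul_Y_mul_X_add_Y_mul_h hab]

end Stmt16
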